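/- arXiv:2305.12981 — 5 statements merged into one kernel-verified Lean document; each statement's English description precedes it below -/
import Mathlib

section
/- The function x ↦ log(1 + x + x²) + x²/6 is convex on R, and ψ(x) ≤ log(1 + x + x²) for every x ∈ R, where ψ is the truncation function. -/
open MeasureTheory ProbabilityTheory Real
open scoped ENNReal NNReal

noncomputable section

/-- The diagonal part of a matrix: off-diagonal entries set to zero. -/
def diagPart {d : ℕ} (M : Matrix (Fin d) (Fin d) ℝ) : Matrix (Fin d) (Fin d) ℝ :=
  Matrix.of fun i j => if i = j then M i j else 0

/-- The off-diagonal part of a matrix. -/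
def offPart {d : ℕ} (M : Matrix (Fin d) (Fin d) ℝ) : Matrix (Fin d) (Fin d) ℝ :=
  M - diagPart M

/-- Outer product `x xᵀ`. -/
def outer {d : ℕ} (x : Fin d → ℝ) : Matrix (Fin d) (Fin d) ℝ :=
  Matrix.of fun i j => x i * x j

/-- Bilinear form `uᵀ M w`. -/
def bilinForm {d : ℕ} (M : Matrix (Fin d) (Fin d) ℝ) (u w : Fin d → ℝ) : ℝ :=
  ∑ i, ∑ j, u i * M i j * w j

/-- Quadratic form `vᵀ M v`. -/
def quadForm {d : ℕ} (M : Matrix (Fin d) (Fin d) ℝ) (v : Fin d → ℝ) : ℝ :=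
  bilinForm M v v

/-- Operator (spectral) norm of a matrix acting on Euclidean space. -/
def opNorm {d : ℕ} (M : Matrix (Fin d) (Fin d) ℝ) : ℝ :=
  ‖LinearMap.toContinuousLinearMap (Matrix.toEuclideanLin M)‖

/-- Effective rank `tr Σ / ‖Σ‖`. -/
def effRank {d : ℕ} (S : Matrix (Fin d) (Fin d) ℝ) : ℝ :=
  S.trace / opNorm S

/-- The unit sphere `S^{d-1}` in `ℝ^d`. -/
def unitSphere (d : ℕ) : Set (Fin d → ℝ) := {v | ∑ i, (v i) ^ 2 = 1}

/-- The truncation function: `ψ(x) = x` on `[-1,1]` and `ψ(x) = sign x` for `|x| > 1`. -/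
def psi (x : ℝ) : ℝ := max (-1) (min 1 x)

variable {Ω : Type*} [MeasureSpace Ω]

/-- `X` has zero mean (coordinatewise integrable with zero integral). -/
def ZeroMean {d : ℕ} (X : Ω → Fin d → ℝ) : Prop :=
  ∀ i, Integrable (fun ω => X ω i) ∧ ∫ ω, X ω i = 0

/-- `S` is the covariance matrix of the (zero-mean) random vector `X`. -/
def IsCov {d : ℕ} (X : Ω → Fin d → ℝ) (S : Matrix (Fin d) (Fin d) ℝ) : Prop :=
  ∀ i j, S i j = ∫ ω, X ω i * X ω j

/-- All fourth moments of the coordinates of `X` are finite. -/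
def FiniteFourthMoments {d : ℕ} (X : Ω → Fin d → ℝ) : Prop :=
  ∀ i j k l : Fin d, Integrable (fun ω => X ω i * X ω j * X ω k * X ω l)

/-- The `L₄-L₂` moment equivalence (hypercontractivity) with constant `κ`:
for every unit vector `v`, `(E|⟨X,v⟩|⁴)^{1/4} ≤ κ (E|⟨X,v⟩|²)^{1/2}`. -/
def L4L2 {d : ℕ} (X : Ω → Fin d → ℝ) (κ : ℝ) : Prop :=
  ∀ v ∈ unitSphere d,
    (∫ ω, |∑ i, X ω i * v i| ^ 4) ^ ((1 : ℝ)/4) ≤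
      κ * (∫ ω, |∑ i, X ω i * v i| ^ 2) ^ ((1 : ℝ)/2)

/-- `ε : Ω → Fin d → ℝ` is a vector of i.i.d. Bernoulli(p) {0,1}-valued random variables. -/
def IsBernoulliMask {d : ℕ} (p : ℝ) (ε : Ω → Fin d → ℝ) : Prop :=
  (∀ ω i, ε ω i = 0 ∨ ε ω i = 1) ∧
  (∀ i, Measurable fun ω => ε ω i) ∧
  (∀ i, (ℙ : Measure Ω) {ω | ε ω i = 1} = ENNReal.ofReal p) ∧
  iIndepFun (fun i ω => ε ω i) ℙ

/-- `Y = X ⊙ p`: the `p`-sparsification of `X` by the Bernoulli mask `ε`,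
with `ε` independent of `X`. -/
def IsSparsified {d : ℕ} (p : ℝ) (X ε Y : Ω → Fin d → ℝ) : Prop :=
  IsBernoulliMask p ε ∧ Measurable X ∧ IndepFun X ε ∧ ∀ ω i, Y ω i = X ω i * ε ω i

/-- `Y 0, ..., Y (N-1)` are i.i.d. copies of the `p`-sparsification of `X`. -/
def IsIIDSparsifiedSample {d N : ℕ} (p : ℝ) (X : Ω → Fin d → ℝ)
    (Y : Fin N → Ω → Fin d → ℝ) : Prop :=
  (∀ j, Measurable (Y j)) ∧
  iIndepFun Y ℙ ∧
  ∃ ε Y₀, Measurable Y₀ ∧ IsSparsified p X ε Y₀ ∧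
    ∀ j, Measure.map (Y j) ℙ = Measure.map Y₀ ℙ

/-- `θ` is a Gaussian vector with mean `m` and covariance `σ2 • I` (independent
Gaussian coordinates). -/
def IsGaussianVecIndep {d : ℕ} (m : Fin d → ℝ) (σ2 : ℝ≥0) (θ : Ω → Fin d → ℝ) : Prop :=
  (∀ i, Measurable fun ω => θ ω i) ∧
  (∀ i, Measure.map (fun ω => θ ω i) ℙ = gaussianReal (m i) σ2) ∧
  iIndepFun (fun i ω => θ ω i) ℙ

/-- `G` is a centered Gaussian vector with covariance matrix `S`: every linear marginal
`⟨G, v⟩` is a real Gaussian with mean `0` and variance `vᵀ S v`. -/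
def IsCenteredGaussianVector {d : ℕ} (S : Matrix (Fin d) (Fin d) ℝ) (G : Ω → Fin d → ℝ) : Prop :=
  Measurable G ∧
  ∀ v : Fin d → ℝ, Measure.map (fun ω => ∑ i, G ω i * v i) ℙ =
    gaussianReal 0 (quadForm S v).toNNReal

/-! The second derivative of `log (1 + x + x²) + x² / 6` is `(x - 1)² (x + 2)² / (3 (1 + x + x²)²)`,
a perfect square. For the bound, `ψ x ≤ log (1 + x + x²)` splits into `-1 ≤ log (1 + x + x²)`,
which holds since `1 + x + x² ≥ 3/4 > e⁻¹`, and `min 1 x ≤ log (1 + x + x²)`, which on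
`[-1, 1]` is `eˣ ≤ 1 + x + x²`. -/

lemma convexOn_univ_of_hasDerivAt2_nonneg {f f' f'' : ℝ → ℝ}
    (hf : ∀ x, HasDerivAt f (f' x) x) (hf' : ∀ x, HasDerivAt f' (f'' x) x)
    (hf'' : ∀ x, 0 ≤ f'' x) : ConvexOn ℝ Set.univ f :=
  convexOn_of_hasDerivWithinAt2_nonneg convex_univ
    (fun x _ => (hf x).continuousAt.continuousWithinAt)
    (fun x _ => (hf x).hasDerivWithinAt) (fun x _ => (hf' x).hasDerivWithinAt)
    (fun x _ => hf'' x)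

lemma three_fourths_le_one_add_add_sq (x : ℝ) : 3 / 4 ≤ 1 + x + x ^ 2 := by
  nlinarith [sq_nonneg (x + 1 / 2)]

lemma one_add_add_sq_pos (x : ℝ) : 0 < 1 + x + x ^ 2 :=
  lt_of_lt_of_le (by norm_num) (three_fourths_le_one_add_add_sq x)

lemma hasDerivAt_one_add_add_sq (x : ℝ) :
    HasDerivAt (fun x : ℝ => 1 + x + x ^ 2) (1 + 2 * x) x :=
  (((hasDerivAt_id' x).const_add 1).add (hasDerivAt_pow 2 x)).congr_deriv (by ring)

lemma hasDerivAt_log_one_add_add_sq_add_sq_div_six (x : ℝ) :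
    HasDerivAt (fun x : ℝ => Real.log (1 + x + x ^ 2) + x ^ 2 / 6)
      ((1 + 2 * x) / (1 + x + x ^ 2) + x / 3) x := by
  have hquad : HasDerivAt (fun x : ℝ => x ^ 2 / 6) (x / 3) x :=
    ((hasDerivAt_pow 2 x).div_const 6).congr_deriv (by ring)
  exact ((hasDerivAt_one_add_add_sq x).log (one_add_add_sq_pos x).ne').add hquad

lemma hasDerivAt_one_add_two_mul_div_add_div_three (x : ℝ) :
    HasDerivAt (fun x : ℝ => (1 + 2 * x) / (1 + x + x ^ 2) + x / 3)
      ((x - 1) ^ 2 * (x + 2) ^ 2 / (3 * (1 + x + x ^ 2) ^ 2)) x := by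
  have hnum : HasDerivAt (fun x : ℝ => 1 + 2 * x) 2 x := by
    simpa using ((hasDerivAt_id x).const_mul 2).const_add 1
  have hq := (one_add_add_sq_pos x).ne'
  refine ((hnum.div (hasDerivAt_one_add_add_sq x) hq).add
    ((hasDerivAt_id x).div_const 3)).congr_deriv ?_
  field_simp
  ring

lemma convexOn_log_one_add_add_sq_add_sq_div_six :
    ConvexOn ℝ Set.univ (fun x : ℝ => Real.log (1 + x + x ^ 2) + x ^ 2 / 6) :=
  convexOn_univ_of_hasDerivAt2_nonneg hasDerivAt_log_one_add_add_sq_add_sq_div_six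
    hasDerivAt_one_add_two_mul_div_add_div_three (fun _ => by positivity)

lemma neg_one_le_log_one_add_add_sq (x : ℝ) : -1 ≤ Real.log (1 + x + x ^ 2) := by
  have hq := three_fourths_le_one_add_add_sq x
  have hinv : (1 + x + x ^ 2)⁻¹ ≤ 4 / 3 := by
    rw [inv_le_comm₀ (one_add_add_sq_pos x) (by norm_num)]
    linarith
  linarith [Real.one_sub_inv_le_log_of_pos (one_add_add_sq_pos x)]

lemma self_le_log_one_add_add_sq {x : ℝ} (hx : x ≤ 1) : x ≤ Real.log (1 + x + x ^ 2) := by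
  rcases le_total x (-1) with hx' | hx'
  · exact hx'.trans (neg_one_le_log_one_add_add_sq x)
  · rw [Real.le_log_iff_exp_le (one_add_add_sq_pos x)]
    linarith [(abs_le.1 (Real.abs_exp_sub_one_sub_id_le (abs_le.2 ⟨hx', hx⟩))).2]

lemma one_le_log_one_add_add_sq {x : ℝ} (hx : 1 ≤ x) : 1 ≤ Real.log (1 + x + x ^ 2) := by
  rw [Real.le_log_iff_exp_le (one_add_add_sq_pos x)]
  nlinarith [Real.exp_one_lt_d9]

/-- The function `x ↦ log(1 + x + x²) + x²/6` is convex on `ℝ`, and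
`ψ(x) ≤ log(1 + x + x²)` for every real `x`. -/
theorem statement_5 :
    ConvexOn ℝ Set.univ (fun x : ℝ => Real.log (1 + x + x ^ 2) + x ^ 2 / 6) ∧
    ∀ x : ℝ, psi x ≤ Real.log (1 + x + x ^ 2) := by
  refine ⟨convexOn_log_one_add_add_sq_add_sq_div_six,
    fun x => max_le (neg_one_le_log_one_add_add_sq x) ?_⟩
  rcases le_total x 1 with hx | hx
  · exact (min_le_right _ _).trans (self_le_log_one_add_add_sq hx)
  · exact (min_le_left _ _).trans (one_le_log_one_add_add_sq hx)
end
end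

section
/- Let X be a zero-mean random vector in R^d with covariance matrix Σ satisfying the L4-L2 moment equivalence with constant κ, let p ∈ (0,1], and let Y = X ⊙ p be the p-sparsified vector. Then for every unit vector v ∈ S^{d−1}, E (vᵀ Diag(Y⊗Y) v)² ≤ 2 p κ⁴ ‖Diag(Σ)‖², where ‖·‖ is the operator norm. -/
/-! Because the mask is `{0,1}`-valued, `vᵀ Diag(Y⊗Y) v = ∑ᵢ vᵢ² Xᵢ² εᵢ`, and Jensen's inequality
for the weights `vᵢ²` bounds its square by `∑ᵢ vᵢ² Xᵢ⁴ εᵢ`. By independence of `X` and `ε` this has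
expectation `p ∑ᵢ vᵢ² E Xᵢ⁴`, and the `L₄-L₂` equivalence in the direction `eᵢ` gives
`E Xᵢ⁴ ≤ κ⁴ Σᵢᵢ² ≤ κ⁴ ‖Diag Σ‖²`. -/

open MeasureTheory ProbabilityTheory Real
open scoped ENNReal NNReal

lemma abs_apply_self_le_opNorm {d : ℕ} (M : Matrix (Fin d) (Fin d) ℝ) (i : Fin d) :
    |M i i| ≤ opNorm M := by
  set L := LinearMap.toContinuousLinearMap (Matrix.toEuclideanLin M)
  set e : EuclideanSpace ℝ (Fin d) := EuclideanSpace.single i 1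
  have hLe : L e i = M i i := by simp [L, e, Matrix.toLpLin_apply]
  calc |M i i| = ‖L e i‖ := by rw [hLe, Real.norm_eq_abs]
    _ ≤ ‖L e‖ := PiLp.norm_apply_le _ _
    _ ≤ ‖L‖ * ‖e‖ := L.le_opNorm e
    _ = opNorm M := by simp [e, opNorm, L]

lemma le_pow_four_mul_sq_of_rpow_le {A B κ : ℝ} (hA : 0 ≤ A) (hB : 0 ≤ B)
    (h : A ^ ((1 : ℝ) / 4) ≤ κ * B ^ ((1 : ℝ) / 2)) : A ≤ κ ^ 4 * B ^ 2 := by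
  have h4 := pow_le_pow_left₀ (rpow_nonneg hA _) h 4
  rwa [mul_pow, ← rpow_natCast, ← rpow_natCast (B ^ _), ← rpow_mul hA, ← rpow_mul hB,
    show (1 : ℝ) / 4 * (4 : ℕ) = 1 by norm_num, show (1 : ℝ) / 2 * (4 : ℕ) = (2 : ℕ) by norm_num,
    rpow_one, rpow_natCast] at h4

lemma quadForm_diagPart_outer {d : ℕ} (x v : Fin d → ℝ) :
    quadForm (diagPart (outer x)) v = ∑ i, v i ^ 2 * x i ^ 2 := by
  simp only [quadForm, bilinForm, diagPart, outer, Matrix.of_apply, mul_ite, ite_mul, mul_zero,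
    zero_mul, Finset.sum_ite_eq, Finset.mem_univ, if_true]
  exact Finset.sum_congr rfl fun i _ => by ring

lemma quadForm_diagPart_outer_sq_le {d : ℕ} (x : Fin d → ℝ) {v : Fin d → ℝ}
    (hv : v ∈ unitSphere d) :
    quadForm (diagPart (outer x)) v ^ 2 ≤ ∑ i, v i ^ 2 * x i ^ 4 := by
  have h := Finset.sum_mul_sq_le_sq_mul_sq Finset.univ v (fun i => v i * x i ^ 2)
  rw [show ∑ i, v i ^ 2 = 1 from hv, one_mul] at h
  have hl : ∑ i, v i ^ 2 * x i ^ 2 = ∑ i, v i * (v i * x i ^ 2) :=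
    Finset.sum_congr rfl fun i _ => by ring
  have hr : ∑ i, v i ^ 2 * x i ^ 4 = ∑ i, (v i * x i ^ 2) ^ 2 :=
    Finset.sum_congr rfl fun i _ => by ring
  rwa [quadForm_diagPart_outer, hl, hr]

lemma integral_quadForm_diagPart_outer_sq_le {Ω : Type*} [MeasurableSpace Ω] {μ : Measure Ω}
    {d : ℕ} {Y : Ω → Fin d → ℝ} {v : Fin d → ℝ} (hv : v ∈ unitSphere d)
    (hY : ∀ i, Integrable (fun ω => Y ω i ^ 4) μ) :
    ∫ ω, quadForm (diagPart (outer (Y ω))) v ^ 2 ∂μ ≤ ∑ i, v i ^ 2 * ∫ ω, Y ω i ^ 4 ∂μ := by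
  have hsum : Integrable (fun ω => ∑ i, v i ^ 2 * Y ω i ^ 4) μ :=
    integrable_finsetSum _ fun i _ => (hY i).const_mul _
  calc ∫ ω, quadForm (diagPart (outer (Y ω))) v ^ 2 ∂μ
      ≤ ∫ ω, ∑ i, v i ^ 2 * Y ω i ^ 4 ∂μ :=
        integral_mono_of_nonneg (.of_forall fun _ => sq_nonneg _) hsum
          (.of_forall fun ω => quadForm_diagPart_outer_sq_le _ hv)
    _ = ∑ i, v i ^ 2 * ∫ ω, Y ω i ^ 4 ∂μ := by
        rw [integral_finsetSum _ fun i _ => (hY i).const_mul _]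
        simp_rw [integral_const_mul]

section

variable {Ω : Type*} [MeasureSpace Ω] {d : ℕ}

lemma L4L2.integral_pow_four_le {X : Ω → Fin d → ℝ} {κ : ℝ} (hL : L4L2 X κ) (i : Fin d) :
    ∫ ω, X ω i ^ 4 ≤ κ ^ 4 * (∫ ω, X ω i ^ 2) ^ 2 := by
  have hi : Pi.single i 1 ∈ unitSphere d := by simp [unitSphere, Pi.single_apply]
  refine le_pow_four_mul_sq_of_rpow_le (integral_nonneg fun _ => by positivity)
    (integral_nonneg fun _ => by positivity) ?_
  simpa [Pi.single_apply, (by decide : Even 4).pow_abs] using hL _ hi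

lemma IsBernoulliMask.integral_eq {p : ℝ} {ε : Ω → Fin d → ℝ} (h : IsBernoulliMask p ε)
    (hp : 0 ≤ p) (i : Fin d) : ∫ ω, ε ω i = p := by
  obtain ⟨h01, hmeas, hprob, -⟩ := h
  have hind : ∫ ω, ε ω i = ∫ ω, {ω | ε ω i = 1}.indicator 1 ω := by
    congr 1 with ω
    rcases h01 ω i with h | h <;> simp [h]
  have hs : MeasurableSet {ω | ε ω i = 1} := hmeas i (measurableSet_singleton 1)
  rw [hind, integral_indicator_one hs, measureReal_def, hprob, ENNReal.toReal_ofReal hp]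

lemma IsSparsified.pow_four_eq {p : ℝ} {X ε Y : Ω → Fin d → ℝ} (h : IsSparsified p X ε Y)
    (ω : Ω) (i : Fin d) : Y ω i ^ 4 = X ω i ^ 4 * ε ω i := by
  rw [h.2.2.2 ω i]
  rcases h.1.1 ω i with hε | hε <;> simp [hε]

lemma IsSparsified.integrable_pow_four {p : ℝ} {X ε Y : Ω → Fin d → ℝ}
    (h : IsSparsified p X ε Y) {i : Fin d} (hX : Integrable (fun ω => X ω i ^ 4)) :
    Integrable (fun ω => Y ω i ^ 4) := by
  simp_rw [h.pow_four_eq]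
  refine hX.mul_bdd (c := 1) (h.1.2.1 i).aestronglyMeasurable (.of_forall fun ω => ?_)
  rcases h.1.1 ω i with hε | hε <;> simp [hε]

lemma IsSparsified.integral_pow_four {p : ℝ} {X ε Y : Ω → Fin d → ℝ}
    (h : IsSparsified p X ε Y) (hp : 0 ≤ p) (i : Fin d) :
    ∫ ω, Y ω i ^ 4 = p * ∫ ω, X ω i ^ 4 := by
  have hindep : IndepFun (fun ω => X ω i ^ 4) (fun ω => ε ω i) :=
    h.2.2.1.comp ((measurable_pi_apply i).pow_const 4) (measurable_pi_apply i)
  simp_rw [h.pow_four_eq]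
  have hX4 : Measurable fun ω => X ω i ^ 4 := ((measurable_pi_apply i).comp h.2.1).pow_const 4
  rw [hindep.integral_fun_mul_eq_mul_integral hX4.aestronglyMeasurable
    (h.1.2.1 i).aestronglyMeasurable, h.1.integral_eq hp, mul_comm]

end

theorem statement_6_general {Ω : Type*} [MeasureSpace Ω]
    {d : ℕ} (X ε Y : Ω → Fin d → ℝ) (S : Matrix (Fin d) (Fin d) ℝ) (κ p : ℝ)
    (hcov : IsCov X S) (hmom : FiniteFourthMoments X)
    (hL : L4L2 X κ) (hp : p ∈ Set.Ioc (0 : ℝ) 1)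
    (hY : IsSparsified p X ε Y) :
    ∀ v ∈ unitSphere d,
      (∫ ω, (quadForm (diagPart (outer (Y ω))) v) ^ 2) ≤
        2 * p * κ ^ 4 * (opNorm (diagPart S)) ^ 2 := by
  intro v hv
  have hp0 : 0 ≤ p := hp.1.le
  set B := opNorm (diagPart S)
  have hX4 (i : Fin d) : Integrable (fun ω => X ω i ^ 4) := by
    simpa only [pow_succ, pow_zero, one_mul, mul_assoc] using hmom i i i i
  have hSB (i : Fin d) : ∫ ω, X ω i ^ 2 ≤ B := by
    have h := abs_apply_self_le_opNorm (diagPart S) i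
    simp only [diagPart, Matrix.of_apply, if_true, hcov i i, ← sq] at h
    exact (le_abs_self _).trans h
  calc ∫ ω, quadForm (diagPart (outer (Y ω))) v ^ 2
      ≤ ∑ i, v i ^ 2 * ∫ ω, Y ω i ^ 4 :=
        integral_quadForm_diagPart_outer_sq_le hv fun i => hY.integrable_pow_four (hX4 i)
    _ = ∑ i, v i ^ 2 * (p * ∫ ω, X ω i ^ 4) := by simp_rw [hY.integral_pow_four hp0]
    _ ≤ ∑ i, v i ^ 2 * (p * (κ ^ 4 * B ^ 2)) := by
        gcongr with i
        exact (hL.integral_pow_four_le i).trans (by gcongr; exact hSB i)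
    _ = p * κ ^ 4 * B ^ 2 := by
        rw [← Finset.sum_mul, show ∑ i, v i ^ 2 = 1 from hv, one_mul, mul_assoc]
    _ ≤ 2 * p * κ ^ 4 * B ^ 2 := by
        have : 0 ≤ p * κ ^ 4 * B ^ 2 := by positivity
        linarith

/-- If `X` is zero-mean with covariance `Σ` satisfying `L₄-L₂` with constant `κ`,
`p ∈ (0,1]` and `Y = X ⊙ p`, then for every unit vector `v`,
`E (vᵀ Diag(Y⊗Y) v)² ≤ 2 p κ⁴ ‖Diag(Σ)‖²`. -/
theorem statement_6 {Ω : Type*} [MeasureSpace Ω] [IsProbabilityMeasure (ℙ : Measure Ω)]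
    {d : ℕ} (X ε Y : Ω → Fin d → ℝ) (S : Matrix (Fin d) (Fin d) ℝ) (κ p : ℝ)
    (hmean : ZeroMean X) (hcov : IsCov X S) (hmom : FiniteFourthMoments X)
    (hκ : 1 ≤ κ) (hL : L4L2 X κ) (hp : p ∈ Set.Ioc (0 : ℝ) 1)
    (hY : IsSparsified p X ε Y) :
    ∀ v ∈ unitSphere d,
      (∫ ω, (quadForm (diagPart (outer (Y ω))) v) ^ 2) ≤
        2 * p * κ ^ 4 * (opNorm (diagPart S)) ^ 2 :=
  statement_6_general X ε Y S κ p hcov hmom hL hp hY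
end

section
/- Let M be any d×d real matrix, v ∈ R^d, and β > 0. Let θ and ν be independent Gaussian random vectors in R^d, each with mean v and covariance β^{−1} I_d. Then P( θᵀ M ν ≥ vᵀ M v ) ≥ 1/4. -/
open MeasureTheory ProbabilityTheory Real
open scoped ENNReal NNReal

/-! The point reflection `x ↦ 2v - x` preserves the law of `θ` and of `ν`, so the four pairs
obtained by reflecting either coordinate of `(θ, ν)` all have the law of `(θ, ν)`. By
bilinearity the form `xᵀ M y` evaluated at these four pairs sums to `4 vᵀ M v`, hence at least
one of the four events `vᵀ M v ≤ xᵀ M y` occurs, and a union bound gives `1 ≤ 4 P(vᵀ M v ≤ θᵀ M ν)`.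
-/

theorem measurePreserving_pointReflection_gaussianReal (m : ℝ) (s : ℝ≥0) :
    MeasurePreserving (Equiv.pointReflection m) (gaussianReal m s) (gaussianReal m s) := by
  have hsub : ⇑(Equiv.pointReflection m) = (2 * m - ·) := by
    ext x; simp only [Equiv.pointReflection_apply, vsub_eq_sub, vadd_eq_add]; ring
  rw [hsub]
  exact ⟨by fun_prop, by rw [gaussianReal_map_const_sub]; ring_nf⟩

theorem measurePreserving_pointReflection_pi_gaussianReal {ι : Type*} [Fintype ι]
    (m : ι → ℝ) (s : ℝ≥0) :
    MeasurePreserving (Equiv.pointReflection m) (Measure.pi fun i => gaussianReal (m i) s)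
      (Measure.pi fun i => gaussianReal (m i) s) :=
  measurePreserving_pi _ _ fun i => measurePreserving_pointReflection_gaussianReal (m i) s

theorem IsGaussianVecIndep.map_eq_pi {Ω : Type*} [MeasureSpace Ω] {d : ℕ} {m : Fin d → ℝ}
    {s : ℝ≥0} {θ : Ω → Fin d → ℝ} (hθ : IsGaussianVecIndep m s θ) :
    (ℙ : Measure Ω).map θ = Measure.pi fun i => gaussianReal (m i) s := by
  obtain ⟨hmeas, hlaw, hindep⟩ := hθ
  rw [← funext hlaw]
  exact hindep.map_fun_eq_pi_map fun i => (hmeas i).aemeasurable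

theorem measure_univ_le_card_mul_of_forall_exists_mem {α ι : Type*} [MeasurableSpace α]
    [Fintype ι] {μ : Measure α} {g : ι → α → α} (hg : ∀ i, MeasurePreserving (g i) μ μ)
    {A : Set α} (hA : NullMeasurableSet A μ) (hcover : ∀ x, ∃ i, g i x ∈ A) :
    μ Set.univ ≤ Fintype.card ι * μ A :=
  calc μ Set.univ ≤ μ (⋃ i, g i ⁻¹' A) :=
        measure_mono fun x _ => Set.mem_iUnion.2 (hcover x)
    _ ≤ ∑ i, μ (g i ⁻¹' A) := measure_iUnion_fintype_le μ _
    _ = Fintype.card ι * μ A := by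
        simp [fun i => (hg i).measure_preimage hA]

theorem bilinForm_add_pointReflection {d : ℕ} (M : Matrix (Fin d) (Fin d) ℝ)
    (v x y : Fin d → ℝ) :
    bilinForm M x y + bilinForm M (Equiv.pointReflection v x) y
        + bilinForm M x (Equiv.pointReflection v y)
        + bilinForm M (Equiv.pointReflection v x) (Equiv.pointReflection v y)
      = 4 * quadForm M v := by
  simp only [bilinForm, quadForm, ← Finset.sum_add_distrib, Finset.mul_sum]
  refine Finset.sum_congr rfl fun i _ => Finset.sum_congr rfl fun j _ => ?_
  simp only [Equiv.pointReflection_apply, vsub_eq_sub, vadd_eq_add, Pi.add_apply, Pi.sub_apply]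
  ring

def condPointReflection {E : Type*} [AddCommGroup E] (v : E) (b : Bool) : E → E :=
  bif b then Equiv.pointReflection v else id

theorem exists_quadForm_le_bilinForm_condPointReflection {d : ℕ}
    (M : Matrix (Fin d) (Fin d) ℝ) (v x y : Fin d → ℝ) :
    ∃ b : Bool × Bool,
      quadForm M v ≤ bilinForm M (condPointReflection v b.1 x) (condPointReflection v b.2 y) := by
  simp only [Prod.exists, Bool.exists_bool, condPointReflection, cond_false, cond_true, id]
  by_contra! h
  linarith [bilinForm_add_pointReflection M v x y]

theorem statement_9_general {Ω : Type*} [MeasureSpace Ω] [IsProbabilityMeasure (ℙ : Measure Ω)]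
    {d : ℕ} (M : Matrix (Fin d) (Fin d) ℝ) (v : Fin d → ℝ) (β : ℝ)
    (θ ν : Ω → Fin d → ℝ)
    (hθ : IsGaussianVecIndep v (β⁻¹).toNNReal θ)
    (hν : IsGaussianVecIndep v (β⁻¹).toNNReal ν)
    (hind : IndepFun θ ν) :
    ENNReal.ofReal (1 / 4) ≤ ℙ {ω | quadForm M v ≤ bilinForm M (θ ω) (ν ω)} := by
  set γ := Measure.pi fun i => gaussianReal (v i) (β⁻¹).toNNReal
  have hθm : Measurable θ := measurable_pi_lambda _ hθ.1
  have hνm : Measurable ν := measurable_pi_lambda _ hν.1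
  have hlaw : (ℙ : Measure Ω).map (fun ω => (θ ω, ν ω)) = γ.prod γ := by
    rw [(indepFun_iff_map_prod_eq_prod_map_map hθm.aemeasurable hνm.aemeasurable).1 hind,
      hθ.map_eq_pi, hν.map_eq_pi]
  have hreflect (b : Bool) : MeasurePreserving (condPointReflection v b) γ γ := by
    cases b
    · exact MeasurePreserving.id γ
    · exact measurePreserving_pointReflection_pi_gaussianReal v _
  set A := {p : (Fin d → ℝ) × (Fin d → ℝ) | quadForm M v ≤ bilinForm M p.1 p.2}
  have hA : MeasurableSet A := measurableSet_le measurable_const (by unfold bilinForm; fun_prop)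
  have hcover := measure_univ_le_card_mul_of_forall_exists_mem
    (g := fun b : Bool × Bool => Prod.map (condPointReflection v b.1) (condPointReflection v b.2))
    (fun b => (hreflect b.1).prod (hreflect b.2)) hA.nullMeasurableSet
    fun p => exists_quadForm_le_bilinForm_condPointReflection M v p.1 p.2
  have hevent : ℙ {ω | quadForm M v ≤ bilinForm M (θ ω) (ν ω)} = γ.prod γ A := by
    rw [← hlaw, Measure.map_apply (hθm.prodMk hνm) hA]; rfl
  rw [hevent, one_div, ENNReal.ofReal_inv_of_pos four_pos, ENNReal.ofReal_ofNat,
    ENNReal.inv_le_iff_le_mul (by simp) (by simp)]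
  simpa using hcover

/-- If `θ, ν` are independent Gaussian vectors in `ℝ^d`, each with mean `v` and
covariance `β⁻¹ I_d`, then for any matrix `M`, `P(θᵀ M ν ≥ vᵀ M v) ≥ 1/4`. -/
theorem statement_9 {Ω : Type*} [MeasureSpace Ω] [IsProbabilityMeasure (ℙ : Measure Ω)]
    {d : ℕ} (M : Matrix (Fin d) (Fin d) ℝ) (v : Fin d → ℝ) (β : ℝ) (hβ : 0 < β)
    (θ ν : Ω → Fin d → ℝ)
    (hθ : IsGaussianVecIndep v (β⁻¹).toNNReal θ)
    (hν : IsGaussianVecIndep v (β⁻¹).toNNReal ν)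
    (hind : IndepFun θ ν) :
    ENNReal.ofReal (1 / 4) ≤ ℙ {ω | quadForm M v ≤ bilinForm M (θ ω) (ν ω)} :=
  statement_9_general M v β θ ν hθ hν hind
end

section
/- Let D be a d×d real diagonal matrix with diagonal entries d_1,...,d_d, let v ∈ R^d, and let β > 0. Let θ and ν be independent Gaussian vectors in R^d, each with mean v and covariance β^{−1} I_d. Then E (θᵀ D ν)² = β^{−2} ‖D‖_F² + (vᵀ D v)² + 2 β^{−1} ‖D v‖_2², where ‖D‖_F is the Frobenius norm and ‖·‖_2 the Euclidean norm. -/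
open MeasureTheory ProbabilityTheory Real
open scoped ENNReal NNReal

/-!
Expanding `θᵀ D ν = ∑ᵢ dᵢ θᵢ νᵢ` and using the independence of `θ` and `ν` gives
`E (θᵀ D ν)² = ∑ᵢⱼ dᵢ dⱼ Sᵢⱼ²`, where `S = E θθᵀ = E ννᵀ = v vᵀ + β⁻¹ I` is the common
second-moment matrix (its off-diagonal entries factor by independence of the coordinates).
Squaring `S` entrywise and summing against `dᵢ dⱼ` yields the three terms of the formula.
-/

lemma integral_sq_gaussianReal (μ : ℝ) (v : ℝ≥0) :
    ∫ x, x ^ 2 ∂gaussianReal μ v = μ ^ 2 + v := by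
  have h := variance_eq_sub (memLp_id_gaussianReal (μ := μ) (v := v) 2)
  simp only [Pi.pow_apply, id] at h
  rw [variance_id_gaussianReal, integral_id_gaussianReal] at h
  linarith

section MapEqGaussianReal

variable {Ω : Type*} [MeasurableSpace Ω] {P : Measure Ω} {X : Ω → ℝ} {μ : ℝ} {v : ℝ≥0}

lemma memLp_two_of_map_eq_gaussianReal (hX : Measurable X) (h : P.map X = gaussianReal μ v) :
    MemLp X 2 P :=
  (memLp_map_measure_iff aestronglyMeasurable_id hX.aemeasurable).mp
    (h ▸ memLp_id_gaussianReal' 2 (by norm_num))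

lemma integral_of_map_eq_gaussianReal (hX : Measurable X) (h : P.map X = gaussianReal μ v) :
    ∫ ω, X ω ∂P = μ := by
  rw [← integral_map (f := fun x => x) hX.aemeasurable aestronglyMeasurable_id, h,
    integral_id_gaussianReal]

lemma integral_sq_of_map_eq_gaussianReal (hX : Measurable X) (h : P.map X = gaussianReal μ v) :
    ∫ ω, X ω ^ 2 ∂P = μ ^ 2 + v := by
  rw [← integral_map (f := fun x => x ^ 2) hX.aemeasurable (by fun_prop), h,
    integral_sq_gaussianReal]

end MapEqGaussianReal

namespace IsGaussianVecIndep

variable {Ω : Type*} [MeasureSpace Ω] {d : ℕ} {m : Fin d → ℝ} {σ2 : ℝ≥0} {θ : Ω → Fin d → ℝ}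

lemma memLp_two (h : IsGaussianVecIndep m σ2 θ) (i : Fin d) : MemLp (fun ω => θ ω i) 2 :=
  memLp_two_of_map_eq_gaussianReal (h.1 i) (h.2.1 i)

lemma integral_mul_apply (h : IsGaussianVecIndep m σ2 θ) (i j : Fin d) :
    ∫ ω, θ ω i * θ ω j = m i * m j + if i = j then (σ2 : ℝ) else 0 := by
  obtain ⟨hmeas, hmap, hindep⟩ := h
  by_cases hij : i = j
  · subst hij
    simp only [← sq, if_true, integral_sq_of_map_eq_gaussianReal (hmeas i) (hmap i)]
  · rw [(hindep.indepFun hij).integral_fun_mul_eq_mul_integral (hmeas i).aestronglyMeasurable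
      (hmeas j).aestronglyMeasurable, integral_of_map_eq_gaussianReal (hmeas i) (hmap i),
      integral_of_map_eq_gaussianReal (hmeas j) (hmap j), if_neg hij, add_zero]

end IsGaussianVecIndep

lemma bilinForm_diagonal {d : ℕ} (a u w : Fin d → ℝ) :
    bilinForm (Matrix.diagonal a) u w = ∑ i, a i * u i * w i := by
  simp [bilinForm, Matrix.diagonal_apply, mul_ite, mul_comm, mul_left_comm]

lemma quadForm_diagonal {d : ℕ} (a v : Fin d → ℝ) :
    quadForm (Matrix.diagonal a) v = ∑ i, a i * v i ^ 2 := by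
  simp only [quadForm, bilinForm_diagonal, mul_assoc, sq]

lemma integral_sq_bilinForm_diagonal_of_indepFun {Ω : Type*} [MeasurableSpace Ω] {P : Measure Ω}
    {d : ℕ} (a : Fin d → ℝ) {θ ν : Ω → Fin d → ℝ} (hind : IndepFun θ ν P)
    (hθ : ∀ i, MemLp (fun ω => θ ω i) 2 P) (hν : ∀ i, MemLp (fun ω => ν ω i) 2 P) :
    ∫ ω, bilinForm (Matrix.diagonal a) (θ ω) (ν ω) ^ 2 ∂P =
      ∑ i, ∑ j, a i * a j * (∫ ω, θ ω i * θ ω j ∂P) * ∫ ω, ν ω i * ν ω j ∂P := by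
  have hθθ : ∀ i j, Integrable (fun ω => θ ω i * θ ω j) P :=
    fun i j => (hθ i).integrable_mul (hθ j)
  have hνν : ∀ i j, Integrable (fun ω => ν ω i * ν ω j) P :=
    fun i j => (hν i).integrable_mul (hν j)
  have hindij : ∀ i j, IndepFun (fun ω => θ ω i * θ ω j) (fun ω => ν ω i * ν ω j) P :=
    fun i j => hind.comp ((measurable_pi_apply i).mul (measurable_pi_apply j))
      ((measurable_pi_apply i).mul (measurable_pi_apply j))
  have hint : ∀ i j, Integrable
      (fun ω => a i * a j * ((θ ω i * θ ω j) * (ν ω i * ν ω j))) P := fun i j =>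
    ((hindij i j).integrable_mul (hθθ i j) (hνν i j)).const_mul _
  have hexpand : ∀ ω, bilinForm (Matrix.diagonal a) (θ ω) (ν ω) ^ 2 =
      ∑ i, ∑ j, a i * a j * ((θ ω i * θ ω j) * (ν ω i * ν ω j)) := fun ω => by
    rw [bilinForm_diagonal, sq, Finset.sum_mul_sum]
    exact Finset.sum_congr rfl fun i _ => Finset.sum_congr rfl fun j _ => by ring
  simp_rw [hexpand]
  rw [integral_finsetSum _ fun i _ => integrable_finsetSum _ fun j _ => hint i j]
  refine Finset.sum_congr rfl fun i _ => ?_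
  rw [integral_finsetSum _ fun j _ => hint i j]
  refine Finset.sum_congr rfl fun j _ => ?_
  rw [integral_const_mul, (hindij i j).integral_fun_mul_eq_mul_integral
    (hθθ i j).aestronglyMeasurable (hνν i j).aestronglyMeasurable]
  ring

lemma sum_sum_mul_sq_mul_add_ite {d : ℕ} (a m : Fin d → ℝ) (s : ℝ) :
    ∑ i, ∑ j, a i * a j * (m i * m j + if i = j then s else 0) *
        (m i * m j + if i = j then s else 0) =
      s ^ 2 * ∑ i, a i ^ 2 + (∑ i, a i * m i ^ 2) ^ 2 + 2 * s * ∑ i, (a i * m i) ^ 2 := by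
  have hsplit : ∀ i j, a i * a j * (m i * m j + if i = j then s else 0) *
      (m i * m j + if i = j then s else 0) =
      (a i * m i ^ 2) * (a j * m j ^ 2) +
        if i = j then 2 * s * (a i * m i) ^ 2 + s ^ 2 * a i ^ 2 else 0 := by
    intro i j
    split_ifs with hij
    · subst hij; ring
    · ring
  simp only [hsplit, Finset.sum_add_distrib, Finset.sum_ite_eq, Finset.mem_univ, if_true]
  rw [← Finset.sum_mul_sum, ← Finset.mul_sum, ← Finset.mul_sum]
  ring

theorem statement_10_general {Ω : Type*} [MeasureSpace Ω]
    {d : ℕ} (dd : Fin d → ℝ) (v : Fin d → ℝ) (β : ℝ) (hβ : 0 < β)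
    (θ ν : Ω → Fin d → ℝ)
    (hθ : IsGaussianVecIndep v (β⁻¹).toNNReal θ)
    (hν : IsGaussianVecIndep v (β⁻¹).toNNReal ν)
    (hind : IndepFun θ ν) :
    (∫ ω, (bilinForm (Matrix.diagonal dd) (θ ω) (ν ω)) ^ 2) =
      β⁻¹ ^ 2 * (∑ i, (dd i) ^ 2) + (quadForm (Matrix.diagonal dd) v) ^ 2
        + 2 * β⁻¹ * (∑ i, (dd i * v i) ^ 2) := by
  have hvar : (((β⁻¹).toNNReal : ℝ≥0) : ℝ) = β⁻¹ := Real.coe_toNNReal _ (inv_pos.mpr hβ).le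
  rw [integral_sq_bilinForm_diagonal_of_indepFun dd hind hθ.memLp_two hν.memLp_two]
  simp only [hθ.integral_mul_apply, hν.integral_mul_apply, hvar]
  rw [quadForm_diagonal]
  exact sum_sum_mul_sq_mul_add_ite dd v β⁻¹

/-- If `θ, ν` are independent Gaussian vectors in `ℝ^d`, each with mean `v` and
covariance `β⁻¹ I_d`, and `D` is the diagonal matrix with entries `dd`, then
`E (θᵀ D ν)² = β⁻² ‖D‖_F² + (vᵀ D v)² + 2 β⁻¹ ‖D v‖₂²`. -/
theorem statement_10 {Ω : Type*} [MeasureSpace Ω] [IsProbabilityMeasure (ℙ : Measure Ω)]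
    {d : ℕ} (dd : Fin d → ℝ) (v : Fin d → ℝ) (β : ℝ) (hβ : 0 < β)
    (θ ν : Ω → Fin d → ℝ)
    (hθ : IsGaussianVecIndep v (β⁻¹).toNNReal θ)
    (hν : IsGaussianVecIndep v (β⁻¹).toNNReal ν)
    (hind : IndepFun θ ν) :
    (∫ ω, (bilinForm (Matrix.diagonal dd) (θ ω) (ν ω)) ^ 2) =
      β⁻¹ ^ 2 * (∑ i, (dd i) ^ 2) + (quadForm (Matrix.diagonal dd) v) ^ 2
        + 2 * β⁻¹ * (∑ i, (dd i * v i) ^ 2) :=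
  statement_10_general dd v β hβ θ ν hθ hν hind
end

section
/- Let X be a zero-mean random vector in R^d with covariance matrix Σ satisfying the L4-L2 moment equivalence with constant κ, and let p ∈ (0,1] and Y = X ⊙ p. Then there exists an absolute constant C > 0 such that E ( Σ_{i=1}^d ⟨Y, e_i⟩² )² ≤ C p κ⁴ tr(Σ)². Moreover E Σ_{i=1}^d ⟨Y, e_i⟩² = p tr(Σ). -/
open MeasureTheory ProbabilityTheory Real
open scoped ENNReal NNReal

/-!
Since `εᵢ² = εᵢ`, we have `Yᵢ² = Xᵢ² εᵢ`, so independence of `X` and `ε` gives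
`E Yᵢ² = p Σᵢᵢ`, whence the identity. Expanding the square, `E (∑ Yᵢ²)² = ∑ᵢⱼ E[Xᵢ²Xⱼ²] E[εᵢεⱼ]`
with `E[εᵢεⱼ] ≤ p`, and Cauchy–Schwarz together with the `L₄-L₂` condition at `eᵢ`, `eⱼ`
gives `E[Xᵢ²Xⱼ²] ≤ κ⁴ Σᵢᵢ Σⱼⱼ`; summing yields the bound with `C = 1`.
-/

lemma integral_sum_sq_eq {Ω ι : Type*} [MeasurableSpace Ω] [Fintype ι] {μ : Measure Ω}
    {f : ι → Ω → ℝ} (hf : ∀ i j, Integrable (fun ω => f i ω * f j ω) μ) :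
    ∫ ω, (∑ i, f i ω) ^ 2 ∂μ = ∑ i, ∑ j, ∫ ω, f i ω * f j ω ∂μ := by
  simp_rw [sq, Finset.sum_mul_sum]
  rw [integral_finsetSum _ fun i _ => integrable_finsetSum _ fun j _ => hf i j]
  exact Finset.sum_congr rfl fun i _ => integral_finsetSum _ fun j _ => hf i j

lemma integral_mul_le_sqrt_mul_sqrt_of_nonneg {Ω : Type*} [MeasurableSpace Ω] {μ : Measure Ω}
    {f g : Ω → ℝ} (hf : AEStronglyMeasurable f μ) (hg : AEStronglyMeasurable g μ)
    (hf0 : 0 ≤ f) (hg0 : 0 ≤ g)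
    (hf2 : Integrable (fun ω => f ω ^ 2) μ) (hg2 : Integrable (fun ω => g ω ^ 2) μ) :
    ∫ ω, f ω * g ω ∂μ ≤ √(∫ ω, f ω ^ 2 ∂μ) * √(∫ ω, g ω ^ 2 ∂μ) := by
  have hf2' : MemLp f (ENNReal.ofReal 2) μ := by
    rwa [ENNReal.ofReal_ofNat, memLp_two_iff_integrable_sq hf]
  have hg2' : MemLp g (ENNReal.ofReal 2) μ := by
    rwa [ENNReal.ofReal_ofNat, memLp_two_iff_integrable_sq hg]
  have h := integral_mul_le_Lp_mul_Lq_of_nonneg Real.HolderConjugate.two_two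
    (.of_forall hf0) (.of_forall hg0) hf2' hg2'
  simpa only [← Real.sqrt_eq_rpow, show ∀ x : ℝ, x ^ (2 : ℝ) = x ^ 2 from
    fun x => Real.rpow_natCast x 2] using h

variable {Ω : Type*} [MeasureSpace Ω] {d : ℕ}

lemma IsCov.apply_self {X : Ω → Fin d → ℝ} {S : Matrix (Fin d) (Fin d) ℝ} (hS : IsCov X S)
    (i : Fin d) : S i i = ∫ ω, X ω i ^ 2 := by
  simp only [hS i i, sq]

namespace FiniteFourthMoments

variable {X : Ω → Fin d → ℝ}

lemma integrable_sq_mul_sq (hX : FiniteFourthMoments X) (i j : Fin d) :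
    Integrable fun ω => X ω i ^ 2 * X ω j ^ 2 :=
  (hX i i j j).congr (.of_forall fun ω => by ring)

lemma integrable_pow_four (hX : FiniteFourthMoments X) (i : Fin d) :
    Integrable fun ω => X ω i ^ 4 :=
  (hX.integrable_sq_mul_sq i i).congr (.of_forall fun ω => by ring)

lemma integrable_sq [IsFiniteMeasure (ℙ : Measure Ω)] (hX : FiniteFourthMoments X)
    (hXm : Measurable X) (i : Fin d) : Integrable fun ω => X ω i ^ 2 := by
  have hmeas : AEStronglyMeasurable (fun ω => X ω i ^ 2) ℙ :=
    ((measurable_pi_apply i).comp hXm).pow_const 2 |>.aestronglyMeasurable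
  refine ((memLp_two_iff_integrable_sq hmeas).2 ?_).integrable one_le_two
  exact (hX.integrable_pow_four i).congr (.of_forall fun ω => by ring)

end FiniteFourthMoments

namespace L4L2

variable {X : Ω → Fin d → ℝ} {κ : ℝ}

lemma sqrt_integral_pow_four_le (hL4 : L4L2 X κ) (i : Fin d) :
    √(∫ ω, X ω i ^ 4) ≤ κ ^ 2 * ∫ ω, X ω i ^ 2 := by
  have h := hL4 (Pi.single i 1) (by simp [unitSphere, Pi.single_apply])
  simp only [Pi.single_apply, mul_ite, mul_one, mul_zero, Finset.sum_ite_eq', Finset.mem_univ,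
    if_true, Even.pow_abs (by decide : Even 4), Even.pow_abs (by decide : Even 2)] at h
  have hA : 0 ≤ ∫ ω, X ω i ^ 4 := integral_nonneg fun ω => by positivity
  have hB : 0 ≤ ∫ ω, X ω i ^ 2 := integral_nonneg fun ω => by positivity
  calc √(∫ ω, X ω i ^ 4) = ((∫ ω, X ω i ^ 4) ^ ((1 : ℝ) / 4)) ^ 2 := by
        rw [Real.sqrt_eq_rpow, ← Real.rpow_natCast, ← Real.rpow_mul hA]
        norm_num
    _ ≤ (κ * (∫ ω, X ω i ^ 2) ^ ((1 : ℝ) / 2)) ^ 2 :=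
        pow_le_pow_left₀ (Real.rpow_nonneg hA _) h 2
    _ = κ ^ 2 * ∫ ω, X ω i ^ 2 := by
        rw [mul_pow, ← Real.sqrt_eq_rpow, Real.sq_sqrt hB]

lemma integral_sq_mul_sq_le (hL4 : L4L2 X κ) (hXm : Measurable X)
    (hX : FiniteFourthMoments X) (i j : Fin d) :
    ∫ ω, X ω i ^ 2 * X ω j ^ 2 ≤ κ ^ 4 * (∫ ω, X ω i ^ 2) * ∫ ω, X ω j ^ 2 := by
  have hsq : ∀ k, AEStronglyMeasurable (fun ω => X ω k ^ 2) ℙ := fun k =>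
    ((measurable_pi_apply k).comp hXm).pow_const 2 |>.aestronglyMeasurable
  have h4 : ∀ k, Integrable fun ω => (X ω k ^ 2) ^ 2 := fun k =>
    (hX.integrable_pow_four k).congr (.of_forall fun ω => by ring)
  calc ∫ ω, X ω i ^ 2 * X ω j ^ 2
      ≤ √(∫ ω, (X ω i ^ 2) ^ 2) * √(∫ ω, (X ω j ^ 2) ^ 2) :=
        integral_mul_le_sqrt_mul_sqrt_of_nonneg (hsq i) (hsq j)
          (fun ω => sq_nonneg _) (fun ω => sq_nonneg _) (h4 i) (h4 j)
    _ = √(∫ ω, X ω i ^ 4) * √(∫ ω, X ω j ^ 4) := by simp only [← pow_mul]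
    _ ≤ (κ ^ 2 * ∫ ω, X ω i ^ 2) * (κ ^ 2 * ∫ ω, X ω j ^ 2) :=
        mul_le_mul (hL4.sqrt_integral_pow_four_le i) (hL4.sqrt_integral_pow_four_le j)
          (Real.sqrt_nonneg _) (mul_nonneg (sq_nonneg κ) (integral_nonneg fun ω => sq_nonneg _))
    _ = κ ^ 4 * (∫ ω, X ω i ^ 2) * ∫ ω, X ω j ^ 2 := by ring

end L4L2

namespace IsBernoulliMask

variable {p : ℝ} {ε : Ω → Fin d → ℝ}

lemma mem_Icc (hε : IsBernoulliMask p ε) (ω : Ω) (i : Fin d) : ε ω i ∈ Set.Icc 0 1 := by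
  rcases hε.1 ω i with h | h <;> simp [h]

lemma mul_self (hε : IsBernoulliMask p ε) (ω : Ω) (i : Fin d) :
    ε ω i * ε ω i = ε ω i := by
  rcases hε.1 ω i with h | h <;> simp [h]

lemma integral_eq_s16 [IsFiniteMeasure (ℙ : Measure Ω)] (hε : IsBernoulliMask p ε) (hp : 0 ≤ p)
    (i : Fin d) : ∫ ω, ε ω i = p := by
  have hind : (fun ω => ε ω i) = {ω | ε ω i = 1}.indicator 1 := by
    funext ω
    rcases hε.1 ω i with h | h <;> simp [h]
  have hset : MeasurableSet {ω | ε ω i = 1} := (hε.2.1 i) (measurableSet_singleton 1)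
  rw [hind, integral_indicator_one hset, measureReal_def, hε.2.2.1 i, ENNReal.toReal_ofReal hp]

lemma integrable_mul [IsFiniteMeasure (ℙ : Measure Ω)] (hε : IsBernoulliMask p ε)
    (i j : Fin d) : Integrable fun ω => ε ω i * ε ω j :=
  .of_mem_Icc 0 1 ((hε.2.1 i).mul (hε.2.1 j)).aemeasurable (.of_forall fun ω =>
    ⟨mul_nonneg (hε.mem_Icc ω i).1 (hε.mem_Icc ω j).1,
      mul_le_one₀ (hε.mem_Icc ω i).2 (hε.mem_Icc ω j).1 (hε.mem_Icc ω j).2⟩)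

lemma integral_mul_le [IsFiniteMeasure (ℙ : Measure Ω)] (hε : IsBernoulliMask p ε)
    (hp : 0 ≤ p) (i j : Fin d) : ∫ ω, ε ω i * ε ω j ≤ p :=
  calc ∫ ω, ε ω i * ε ω j ≤ ∫ ω, ε ω i * ε ω i :=
        integral_mono (hε.integrable_mul i j) (hε.integrable_mul i i) fun ω =>
          mul_le_of_le_one_right (hε.mem_Icc ω i).1 (hε.mem_Icc ω j).2 |>.trans_eq
            (hε.mul_self ω i).symm
    _ = p := by simp only [hε.mul_self]; exact hε.integral_eq_s16 hp i

end IsBernoulliMask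

namespace IsSparsified

variable {p : ℝ} {X ε Y : Ω → Fin d → ℝ}

lemma sq_apply (hY : IsSparsified p X ε Y) (ω : Ω) (i : Fin d) :
    Y ω i ^ 2 = X ω i ^ 2 * ε ω i := by
  rw [hY.2.2.2 ω i, mul_pow, sq (ε ω i), hY.1.mul_self]

lemma integral_sq [IsFiniteMeasure (ℙ : Measure Ω)] (hY : IsSparsified p X ε Y) (hp : 0 ≤ p)
    (i : Fin d) : ∫ ω, Y ω i ^ 2 = p * ∫ ω, X ω i ^ 2 := by
  simp only [hY.sq_apply]
  obtain ⟨hε, hXm, hindep, -⟩ := hY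
  have hindep_i : IndepFun (fun ω => X ω i ^ 2) (fun ω => ε ω i) ℙ :=
    hindep.comp ((measurable_pi_apply i).pow_const 2) (measurable_pi_apply i)
  rw [hindep_i.integral_fun_mul_eq_mul_integral
    (((measurable_pi_apply i).comp hXm).pow_const 2).aestronglyMeasurable
    (hε.2.1 i).aestronglyMeasurable, hε.integral_eq_s16 hp, mul_comm]

lemma integrable_sq [IsFiniteMeasure (ℙ : Measure Ω)] (hY : IsSparsified p X ε Y)
    (hX : FiniteFourthMoments X) (i : Fin d) : Integrable fun ω => Y ω i ^ 2 := by
  simp only [hY.sq_apply]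
  obtain ⟨hε, hXm, -, -⟩ := hY
  refine (hX.integrable_sq hXm i).mono'
    ((((measurable_pi_apply i).comp hXm).pow_const 2).mul (hε.2.1 i)).aestronglyMeasurable
    (.of_forall fun ω => ?_)
  rw [Real.norm_eq_abs, abs_of_nonneg (mul_nonneg (sq_nonneg _) (hε.mem_Icc ω i).1)]
  exact mul_le_of_le_one_right (sq_nonneg _) (hε.mem_Icc ω i).2

lemma sq_mul_sq_eq (hY : IsSparsified p X ε Y) (i j : Fin d) :
    (fun ω => Y ω i ^ 2 * Y ω j ^ 2) =
      fun ω => (X ω i ^ 2 * X ω j ^ 2) * (ε ω i * ε ω j) := by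
  funext ω
  rw [hY.sq_apply, hY.sq_apply]
  ring

lemma indepFun_sq_mul_sq (hY : IsSparsified p X ε Y) (i j : Fin d) :
    IndepFun (fun ω => X ω i ^ 2 * X ω j ^ 2) (fun ω => ε ω i * ε ω j) ℙ :=
  hY.2.2.1.comp (((measurable_pi_apply i).pow_const 2).mul ((measurable_pi_apply j).pow_const 2))
    ((measurable_pi_apply i).mul (measurable_pi_apply j))

lemma integrable_sq_mul_sq [IsFiniteMeasure (ℙ : Measure Ω)] (hY : IsSparsified p X ε Y)
    (hX : FiniteFourthMoments X) (i j : Fin d) :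
    Integrable fun ω => Y ω i ^ 2 * Y ω j ^ 2 := by
  rw [hY.sq_mul_sq_eq]
  exact (hY.indepFun_sq_mul_sq i j).integrable_mul (hX.integrable_sq_mul_sq i j)
    (hY.1.integrable_mul i j)

lemma integral_sq_mul_sq_le [IsFiniteMeasure (ℙ : Measure Ω)] (hY : IsSparsified p X ε Y)
    (hp : 0 ≤ p) (i j : Fin d) :
    ∫ ω, Y ω i ^ 2 * Y ω j ^ 2 ≤ p * ∫ ω, X ω i ^ 2 * X ω j ^ 2 := by
  have hXm : ∀ k, Measurable fun ω => X ω k := fun k => (measurable_pi_apply k).comp hY.2.1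
  rw [hY.sq_mul_sq_eq, (hY.indepFun_sq_mul_sq i j).integral_fun_mul_eq_mul_integral
    (((hXm i).pow_const 2).mul ((hXm j).pow_const 2)).aestronglyMeasurable
    ((hY.1.2.1 i).mul (hY.1.2.1 j)).aestronglyMeasurable, mul_comm]
  exact mul_le_mul_of_nonneg_right (hY.1.integral_mul_le hp i j)
    (integral_nonneg fun ω => by positivity)

end IsSparsified

/-- There is an absolute constant `C > 0` such that if `X` is zero-mean with
covariance `Σ` satisfying `L₄-L₂` with constant `κ`, `p ∈ (0,1]` and `Y = X ⊙ p`, then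
`E (Σ_i ⟨Y,e_i⟩²)² ≤ C p κ⁴ tr(Σ)²`; moreover `E Σ_i ⟨Y,e_i⟩² = p tr(Σ)`. -/
theorem statement_16 :
    ∃ C : ℝ, 0 < C ∧
      ∀ (Ω : Type) [MeasureSpace Ω] [IsProbabilityMeasure (ℙ : Measure Ω)]
        (d : ℕ) (X ε Y : Ω → Fin d → ℝ) (S : Matrix (Fin d) (Fin d) ℝ) (κ p : ℝ),
        ZeroMean X → IsCov X S → FiniteFourthMoments X → 1 ≤ κ → L4L2 X κ →
        p ∈ Set.Ioc (0 : ℝ) 1 → IsSparsified p X ε Y →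
        (∫ ω, (∑ i, (Y ω i) ^ 2) ^ 2) ≤ C * p * κ ^ 4 * S.trace ^ 2 ∧
        (∫ ω, ∑ i, (Y ω i) ^ 2) = p * S.trace := by
  refine ⟨1, one_pos, fun Ω _ _ d X ε Y S κ p _ hS hX _ hL4 hp hY => ⟨?_, ?_⟩⟩
  · calc ∫ ω, (∑ i, Y ω i ^ 2) ^ 2 = ∑ i, ∑ j, ∫ ω, Y ω i ^ 2 * Y ω j ^ 2 :=
          integral_sum_sq_eq (hY.integrable_sq_mul_sq hX)
      _ ≤ ∑ i, ∑ j, p * (κ ^ 4 * S i i * S j j) := by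
          gcongr with i _ j _
          rw [hS.apply_self, hS.apply_self]
          exact (hY.integral_sq_mul_sq_le hp.1.le i j).trans
            (mul_le_mul_of_nonneg_left (hL4.integral_sq_mul_sq_le hY.2.1 hX i j) hp.1.le)
      _ = 1 * p * κ ^ 4 * S.trace ^ 2 := by
          rw [Matrix.trace, sq, Finset.sum_mul_sum, Finset.mul_sum]
          refine Finset.sum_congr rfl fun i _ => ?_
          rw [Finset.mul_sum]
          exact Finset.sum_congr rfl fun j _ => by simp only [Matrix.diag_apply]; ring
  · rw [integral_finsetSum _ fun i _ => hY.integrable_sq hX i, Matrix.trace, Finset.mul_sum]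
    exact Finset.sum_congr rfl fun i _ => by
      rw [hY.integral_sq hp.1.le, Matrix.diag_apply, hS.apply_self]
end
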